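/- For every integer n ≥ 0 and every real x, the probabilists' Hermite polynomial admits the integral representation Heₙ(x) = (1/√(2π)) ∫_{−∞}^{∞} (x + iy)ⁿ e^{−y²/2} dy, where the integral is taken in ℂ and equals the real number Heₙ(x). -/

import Mathlib

open MeasureTheory

/-- Probabilists' Hermite polynomial `Heₙ(x) = (−1)ⁿ e^{x²/2} dⁿ/dxⁿ e^{−x²/2}`. -/
noncomputable def He (n : ℕ) (x : ℝ) : ℝ :=
  (-1) ^ n * Real.exp (x ^ 2 / 2) * iteratedDeriv n (fun y => Real.exp (-(y ^ 2) / 2)) x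

/-!
Both sides satisfy the three-term recurrence `Heₙ₊₁(x) = x Heₙ(x) − n Heₙ₋₁(x)` of Mathlib's
`Polynomial.hermite`. For the integral, split `(x + iy)ⁿ⁺¹ = x (x + iy)ⁿ + iy (x + iy)ⁿ` and apply
Gaussian integration by parts, `∫ y f(y) e^{−y²/2} dy = ∫ f'(y) e^{−y²/2} dy`, to the second term:
with `f = (x + iy)ⁿ` it gives `i · n i · ∫ (x + iy)ⁿ⁻¹ e^{−y²/2} dy`. The initial values are `√(2π)`
and `x √(2π)`.
-/

open Polynomial Complex
open scoped Real

namespace Polynomial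

theorem derivative_hermite_succ (n : ℕ) :
    derivative (hermite (n + 1)) = (n + 1 : ℤ[X]) * hermite n := by
  induction n with
  | zero => simp
  | succ n ih =>
    rw [hermite_succ (n + 1), derivative_sub, derivative_mul, derivative_X, ih,
      derivative_mul, hermite_succ n]
    simp only [derivative_add, derivative_natCast, derivative_one]
    push_cast
    ring

theorem hermite_succ_succ (n : ℕ) :
    hermite (n + 2) = X * hermite (n + 1) - (n + 1 : ℤ[X]) * hermite n := by
  rw [hermite_succ (n + 1), derivative_hermite_succ]

end Polynomial

theorem He_eq_aeval_hermite (n : ℕ) (x : ℝ) : He n x = aeval x (hermite n) := by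
  simp only [hermite_eq_deriv_gaussian', He, iteratedDeriv_eq_iterate, neg_div]
  ring

theorem integrable_eval_mul_cexp_neg_sq_div_two (p : ℂ[X]) :
    Integrable fun y : ℝ => p.eval (y : ℂ) * cexp (-(y : ℂ) ^ 2 / 2) := by
  induction p using Polynomial.induction_on' with
  | add p q hp hq =>
    simp only [eval_add, add_mul]
    exact hp.add hq
  | monomial k a =>
    have hreal : Integrable fun y : ℝ => y ^ k * Real.exp (-(1 / 2) * y ^ 2) := by
      simpa only [Real.rpow_natCast] using integrable_rpow_mul_exp_neg_mul_sq (b := 1 / 2)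
        (by norm_num) (s := k) (neg_one_lt_zero.trans_le k.cast_nonneg)
    have hcomplex : Integrable fun y : ℝ => ((y ^ k * Real.exp (-(1 / 2) * y ^ 2) : ℝ) : ℂ) :=
      hreal.ofReal
    refine (hcomplex.const_mul a).congr (.of_forall fun y => ?_)
    simp only [eval_monomial, ofReal_mul, ofReal_pow, ofReal_exp]
    push_cast
    ring_nf

theorem integral_cexp_neg_sq_div_two :
    ∫ y : ℝ, cexp (-(y : ℂ) ^ 2 / 2) = √(2 * π) := by
  have h := integral_gaussian (1 / 2)
  rw [show π / (1 / 2) = 2 * π by ring] at h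
  rw [← h, ← integral_complex_ofReal]
  congr 1 with y
  push_cast
  ring_nf

theorem integral_mul_eval_mul_cexp_neg_sq_div_two (p : ℂ[X]) :
    ∫ y : ℝ, (y : ℂ) * p.eval (y : ℂ) * cexp (-(y : ℂ) ^ 2 / 2) =
      ∫ y : ℝ, p.derivative.eval (y : ℂ) * cexp (-(y : ℂ) ^ 2 / 2) := by
  have hu (y : ℝ) : HasDerivAt (fun t : ℝ => p.eval (t : ℂ)) (p.derivative.eval (y : ℂ)) y :=
    (p.hasDerivAt (y : ℂ)).comp_ofReal
  have hv (y : ℝ) : HasDerivAt (fun t : ℝ => -cexp (-(t : ℂ) ^ 2 / 2))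
      ((y : ℂ) * cexp (-(y : ℂ) ^ 2 / 2)) y := by
    have h : HasDerivAt (fun z : ℂ => -cexp (-z ^ 2 / 2)) ((y : ℂ) * cexp (-(y : ℂ) ^ 2 / 2)) y :=
      ((hasDerivAt_pow 2 (y : ℂ)).neg.div_const 2).cexp.neg.congr_deriv
        (by simp only [Pi.neg_apply]; ring)
    exact h.comp_ofReal
  have hint := integrable_eval_mul_cexp_neg_sq_div_two
  have key := integral_mul_deriv_eq_deriv_mul_of_integrable (fun y _ => hu y) (fun y _ => hv y)
    ((hint (X * p)).congr (.of_forall fun y => by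
      simp only [Pi.mul_apply, eval_mul, eval_X]; ring))
    ((hint p.derivative).neg.congr (.of_forall fun y => by
      simp only [Pi.mul_apply, Pi.neg_apply, mul_neg]))
    ((hint p).neg.congr (.of_forall fun y => by
      simp only [Pi.mul_apply, Pi.neg_apply, mul_neg]))
  calc ∫ y : ℝ, (y : ℂ) * p.eval (y : ℂ) * cexp (-(y : ℂ) ^ 2 / 2)
      = ∫ y : ℝ, p.eval (y : ℂ) * ((y : ℂ) * cexp (-(y : ℂ) ^ 2 / 2)) := by
        congr 1 with y; ring
    _ = -∫ y : ℝ, p.derivative.eval (y : ℂ) * -cexp (-(y : ℂ) ^ 2 / 2) := key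
    _ = ∫ y : ℝ, p.derivative.eval (y : ℂ) * cexp (-(y : ℂ) ^ 2 / 2) := by
        simp only [mul_neg, integral_neg, neg_neg]

noncomputable def hermiteIntegral (n : ℕ) (x : ℝ) : ℂ :=
  ∫ y : ℝ, ((x : ℂ) + I * y) ^ n * cexp (-(y : ℂ) ^ 2 / 2)

-- The truncated `n - 1` at `n = 0` is harmless: its coefficient is `n`.
theorem hermiteIntegral_succ (n : ℕ) (x : ℝ) :
    hermiteIntegral (n + 1) x = x * hermiteIntegral n x - n * hermiteIntegral (n - 1) x := by
  set q : ℂ[X] := C (x : ℂ) + C I * X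
  have hq (y : ℝ) : q.eval (y : ℂ) = x + I * y := by simp [q]
  have hI (m : ℕ) : hermiteIntegral m x =
      ∫ y : ℝ, (q ^ m).eval (y : ℂ) * cexp (-(y : ℂ) ^ 2 / 2) := by
    simp only [hermiteIntegral, eval_pow, hq]
  have hderiv : derivative (q ^ n) = C (n * I) * q ^ (n - 1) := by
    simp only [q, derivative_pow, derivative_add, derivative_C, derivative_mul, derivative_X, C_mul]
    ring
  have hint := integrable_eval_mul_cexp_neg_sq_div_two
  calc hermiteIntegral (n + 1) x
      = ∫ y : ℝ, ((x : ℂ) * ((q ^ n).eval (y : ℂ) * cexp (-(y : ℂ) ^ 2 / 2)) +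
          I * ((y : ℂ) * (q ^ n).eval (y : ℂ) * cexp (-(y : ℂ) ^ 2 / 2))) := by
        rw [hI]
        congr 1 with y
        simp only [eval_pow, hq]
        ring
    _ = x * hermiteIntegral n x +
          I * ∫ y : ℝ, (derivative (q ^ n)).eval (y : ℂ) * cexp (-(y : ℂ) ^ 2 / 2) := by
        rw [integral_add ((hint _).const_mul _), integral_const_mul, integral_const_mul,
          integral_mul_eval_mul_cexp_neg_sq_div_two, hI]
        refine ((hint (X * q ^ n)).const_mul I).congr (.of_forall fun y => ?_)
        simp only [eval_mul, eval_X]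
    _ = x * hermiteIntegral n x - n * hermiteIntegral (n - 1) x := by
        simp only [hderiv, eval_mul, eval_C, mul_assoc, integral_const_mul, ← hI]
        linear_combination (n * hermiteIntegral (n - 1) x) * I_mul_I

theorem hermiteIntegral_zero (x : ℝ) : hermiteIntegral 0 x = √(2 * π) := by
  simp only [hermiteIntegral, pow_zero, one_mul, integral_cexp_neg_sq_div_two]

theorem hermiteIntegral_eq (n : ℕ) (x : ℝ) :
    hermiteIntegral n x = √(2 * π) * aeval x (hermite n) := by
  induction n using Nat.twoStepInduction with
  | zero => simp only [hermiteIntegral_zero, hermite_zero, map_one, ofReal_one, mul_one]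
  | one =>
    rw [hermiteIntegral_succ, hermiteIntegral_zero, hermite_one, aeval_X, Nat.cast_zero,
      zero_mul, sub_zero]
    ring
  | more n ih₀ ih₁ =>
    rw [hermiteIntegral_succ, Nat.add_sub_cancel, ih₀, ih₁, hermite_succ_succ]
    simp only [map_sub, map_mul, aeval_X, map_add, map_natCast, map_one]
    push_cast
    ring

theorem stmt_4 (n : ℕ) (x : ℝ) :
    (He n x : ℂ) = (1 / Real.sqrt (2 * Real.pi) : ℝ) *
      ∫ y : ℝ, ((x : ℂ) + Complex.I * (y : ℂ)) ^ n * Complex.exp (-(y : ℂ) ^ 2 / 2) := by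
  have hpi : Real.sqrt (2 * Real.pi) ≠ 0 := by positivity
  rw [← hermiteIntegral, hermiteIntegral_eq, He_eq_aeval_hermite]
  push_cast
  field_simp
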